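/- arXiv:1802.03296 — 4 statements merged into one kernel-verified Lean document; each statement's English description precedes it below -/
import Mathlib

section
/- If C ⊆ ℝⁿ is a nonempty pointed closed convex set (i.e., its recession cone contains no line, equivalently the recession cone is pointed), then the barrier cone B_C = {a ∈ ℝⁿ : sup_{x∈C} ⟨a,x⟩ < ∞} has nonempty interior. -/
open RealInnerProductSpace

noncomputable def supp {n : ℕ} (C : Set (EuclideanSpace ℝ (Fin n)))
    (a : EuclideanSpace ℝ (Fin n)) : EReal :=
  ⨆ x ∈ C, ((⟪a, x⟫ : ℝ) : EReal)

def barrierCone {n : ℕ} (C : Set (EuclideanSpace ℝ (Fin n))) :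
    Set (EuclideanSpace ℝ (Fin n)) :=
  {a | supp C a < ⊤}

def recCone {n : ℕ} (C : Set (EuclideanSpace ℝ (Fin n))) :
    Set (EuclideanSpace ℝ (Fin n)) :=
  {d | ∀ x ∈ C, ∀ t : ℝ, 0 ≤ t → x + t • d ∈ C}

/-! The recession cone `K` of `C` is a closed convex cone, and since `K ∩ -K = {0}` its inner dual
has nonempty interior: otherwise the dual lies in a hyperplane `uᗮ`, and then `±u` lie in the bidual,
which is `K`. If `-a` is an interior point of the dual, then `⟪a', d⟫ < 0` for every nonzero `d ∈ K`
and every `a'` near `a`. Such an `a'` is bounded above on `C`: otherwise normalising points `x k ∈ C`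
with `⟪a', x k⟫ → ∞` gives, by compactness of the unit sphere, a unit recession direction `d` with
`⟪a', d⟫ ≥ 0`. -/

open Filter Topology

namespace ProperCone

variable {E : Type*} [NormedAddCommGroup E] [InnerProductSpace ℝ E] [CompleteSpace E]

lemma inner_pos_of_mem_interior_innerDual {s : Set E} {b d : E}
    (hb : b ∈ interior (innerDual s : Set E)) (hd : d ∈ s) (hd0 : d ≠ 0) : 0 < ⟪d, b⟫ := by
  have hnear : ∀ᶠ t in 𝓝 (0 : ℝ), b - t • d ∈ (innerDual s : Set E) := by
    refine ((continuous_const.sub (continuous_id.smul continuous_const)).tendsto' 0 b ?_)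
      (mem_interior_iff_mem_nhds.1 hb)
    simp
  have hnear' : ∀ᶠ t in 𝓝[>] (0 : ℝ), b - t • d ∈ (innerDual s : Set E) ∧ 0 < t :=
    (hnear.filter_mono nhdsWithin_le_nhds).and self_mem_nhdsWithin
  obtain ⟨t, hts, ht⟩ := hnear'.exists
  have hdual : 0 ≤ ⟪d, b - t • d⟫ := hts hd
  rw [inner_sub_right, real_inner_smul_right, real_inner_self_eq_norm_sq] at hdual
  have : 0 < t * ‖d‖ ^ 2 := mul_pos ht (by positivity)
  linarith

lemma interior_innerDual_nonempty [FiniteDimensional ℝ E] (K : ProperCone ℝ E)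
    (hK : (K : Set E) ∩ -K = {0}) : (interior (innerDual (K : Set E) : Set E)).Nonempty := by
  set D : ProperCone ℝ E := innerDual (K : Set E)
  by_contra hD
  have hspan : Submodule.span ℝ (D : Set E) ≠ ⊤ := fun htop => hD <|
    D.convex.interior_nonempty_iff_affineSpan_eq_top.2 <|
      (AffineSubspace.affineSpan_eq_top_iff_vectorSpan_eq_top_of_nonempty ℝ E E ⟨0, D.zero_mem⟩).2 <| by
        rw [vectorSpan_eq_span_vsub_set_right ℝ D.zero_mem]
        simpa using htop
  obtain ⟨u, hu, hu0⟩ :=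
    Submodule.exists_mem_ne_zero_of_ne_bot (mt Submodule.orthogonal_eq_bot_iff.1 hspan)
  have hperp : ∀ y ∈ D, ⟪y, u⟫ = 0 := fun y hy =>
    (Submodule.mem_orthogonal _ u).1 hu y (Submodule.subset_span hy)
  have hmem : ∀ v : E, (∀ y ∈ D, ⟪y, v⟫ = 0) → v ∈ K := fun v hv => by
    rw [← innerDual_innerDual K]
    exact fun y hy => (hv y hy).ge
  have hneg : -u ∈ K := hmem (-u) fun y hy => by rw [inner_neg_right, hperp y hy, neg_zero]
  have : u ∈ (K : Set E) ∩ -K := ⟨hmem u hperp, by simpa using hneg⟩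
  exact hu0 (by rwa [hK] at this)

end ProperCone

section RecessionCone

variable {n : ℕ} {C : Set (EuclideanSpace ℝ (Fin n))}

lemma zero_mem_recCone : (0 : EuclideanSpace ℝ (Fin n)) ∈ recCone C := by
  intro x hx t _
  simpa using hx

lemma smul_mem_recCone {c : ℝ} (hc : 0 ≤ c) {d : EuclideanSpace ℝ (Fin n)}
    (hd : d ∈ recCone C) : c • d ∈ recCone C := by
  intro x hx t ht
  simpa [smul_smul] using hd x hx (t * c) (mul_nonneg ht hc)

lemma add_mem_recCone {d₁ d₂ : EuclideanSpace ℝ (Fin n)}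
    (h₁ : d₁ ∈ recCone C) (h₂ : d₂ ∈ recCone C) : d₁ + d₂ ∈ recCone C := by
  intro x hx t ht
  simpa [smul_add, add_assoc] using h₂ _ (h₁ x hx t ht) t ht

lemma isClosed_recCone (hcl : IsClosed C) : IsClosed (recCone C) := by
  have h : recCone C = ⋂ x ∈ C, ⋂ t : ℝ, ⋂ _ : 0 ≤ t,
      (fun d : EuclideanSpace ℝ (Fin n) => x + t • d) ⁻¹' C := by
    ext d
    simp [recCone]
  rw [h]
  exact isClosed_biInter fun x _ => isClosed_iInter fun t => isClosed_iInter fun _ =>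
    hcl.preimage (continuous_const.add (continuous_id.const_smul t))

def recProperCone (hcl : IsClosed C) : ProperCone ℝ (EuclideanSpace ℝ (Fin n)) :=
  ⟨{ carrier := recCone C
     add_mem' := add_mem_recCone
     zero_mem' := zero_mem_recCone
     smul_mem' := fun c _ hd => smul_mem_recCone c.2 hd }, isClosed_recCone hcl⟩

lemma mem_recCone_of_tendsto (hcl : IsClosed C) (hconv : Convex ℝ C)
    {x : ℕ → EuclideanSpace ℝ (Fin n)} (hx : ∀ k, x k ∈ C) {r : ℕ → ℝ} (hr0 : ∀ k, 0 ≤ r k)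
    (hr : Tendsto r atTop (𝓝 0)) {d : EuclideanSpace ℝ (Fin n)}
    (hd : Tendsto (fun k => r k • x k) atTop (𝓝 d)) : d ∈ recCone C := by
  intro z hz t ht
  have hlim : Tendsto (fun k => z + (t * r k) • (x k - z)) atTop (𝓝 (z + t • d)) := by
    have := (tendsto_const_nhds (x := z)).add (hd.const_smul t) |>.sub
      ((hr.const_mul t).smul_const z)
    refine (by simpa using this : Tendsto _ _ (𝓝 (z + t • d))).congr fun k => ?_
    simp only [smul_sub, smul_smul]
    abel
  refine hcl.mem_of_tendsto hlim ?_
  have hsmall : ∀ᶠ k in atTop, t * r k ≤ 1 :=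
    (hr.const_mul t).eventually (eventually_le_nhds (by simp))
  filter_upwards [hsmall] with k hk
  exact hconv.add_smul_sub_mem hz (hx k) ⟨mul_nonneg ht (hr0 k), hk⟩

lemma bddAbove_inner_image_of_inner_neg_on_recCone (hcl : IsClosed C) (hconv : Convex ℝ C)
    {a : EuclideanSpace ℝ (Fin n)} (ha : ∀ d ∈ recCone C, d ≠ 0 → ⟪a, d⟫ < 0) :
    BddAbove ((⟪a, ·⟫) '' C) := by
  by_contra hunb
  obtain ⟨x, hxC, hx⟩ : ∃ x : ℕ → EuclideanSpace ℝ (Fin n), (∀ k, x k ∈ C) ∧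
      ∀ k : ℕ, (k : ℝ) < ⟪a, x k⟫ := by
    simp only [bddAbove_def, Set.forall_mem_image, not_exists, not_forall, not_le] at hunb
    choose x hxC hx using fun k : ℕ => hunb k
    exact ⟨x, hxC, hx⟩
  have hx0 : ∀ k, x k ≠ 0 := fun k h => by
    simpa [h] using (Nat.cast_nonneg k).trans_lt (hx k)
  have ha0 : 0 < ‖a‖ := norm_pos_iff.2 fun h => by simpa [h] using hx 0
  have hnorm : Tendsto (fun k => ‖x k‖) atTop atTop := by
    refine Tendsto.atTop_of_const_mul₀ ha0 (tendsto_atTop_mono (fun k => ?_)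
      tendsto_natCast_atTop_atTop)
    exact (hx k).le.trans (real_inner_le_norm a (x k))
  obtain ⟨d, hd, φ, hφ, hlim⟩ := (isCompact_sphere (0 : EuclideanSpace ℝ (Fin n)) 1).tendsto_subseq
    (x := fun k => ‖x k‖⁻¹ • x k) fun k => by simpa using norm_smul_inv_norm (𝕜 := ℝ) (hx0 k)
  have hdrec : d ∈ recCone C :=
    mem_recCone_of_tendsto hcl hconv (fun k => hxC (φ k)) (fun k => inv_nonneg.2 (norm_nonneg _))
      ((hnorm.comp hφ.tendsto_atTop).inv_tendsto_atTop) hlim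
  have hd0 : d ≠ 0 := by rintro rfl; simp at hd
  have hnonneg : 0 ≤ ⟪a, d⟫ := by
    refine ge_of_tendsto' (tendsto_const_nhds.inner hlim) fun k => ?_
    rw [Function.comp_apply, real_inner_smul_right]
    exact mul_nonneg (by positivity) ((Nat.cast_nonneg _).trans (hx (φ k)).le)
  exact (ha d hdrec hd0).not_ge hnonneg

lemma mem_barrierCone_of_bddAbove {a : EuclideanSpace ℝ (Fin n)}
    (h : BddAbove ((⟪a, ·⟫) '' C)) : a ∈ barrierCone C := by
  obtain ⟨M, hM⟩ := h
  have : supp C a ≤ M := iSup₂_le fun x hx => EReal.coe_le_coe_iff.2 (hM ⟨x, hx, rfl⟩)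
  exact this.trans_lt (EReal.coe_lt_top M)

end RecessionCone

theorem stmt0_general {n : ℕ} (C : Set (EuclideanSpace ℝ (Fin n)))
    (hcl : IsClosed C) (hconv : Convex ℝ C)
    (hpt : recCone C ∩ (-recCone C) = {0}) :
    (interior (barrierCone C)).Nonempty := by
  obtain ⟨b, hb⟩ := (recProperCone hcl).interior_innerDual_nonempty hpt
  refine ⟨-b, mem_interior.2 ⟨-interior (ProperCone.innerDual (recCone C) : Set _), ?_,
    isOpen_interior.neg, Set.neg_mem_neg.2 hb⟩⟩
  intro a ha
  refine mem_barrierCone_of_bddAbove (bddAbove_inner_image_of_inner_neg_on_recCone hcl hconv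
    fun d hd hd0 => ?_)
  have := ProperCone.inner_pos_of_mem_interior_innerDual ha hd hd0
  rwa [inner_neg_right, neg_pos, real_inner_comm] at this

theorem stmt0 {n : ℕ} (C : Set (EuclideanSpace ℝ (Fin n)))
    (hne : C.Nonempty) (hcl : IsClosed C) (hconv : Convex ℝ C)
    (hpt : recCone C ∩ (-recCone C) = {0}) :
    (interior (barrierCone C)).Nonempty :=
  stmt0_general C hcl hconv hpt
end

section
/- For any closed convex set C ⊆ ℝⁿ containing the origin, the closure of the barrier cone of C equals the polar of the recession cone of C, i.e., cl(B_C) = (0⁺C)°. -/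
open RealInnerProductSpace

/-! Hahn–Banach separation describes the closed convex set `C` by the half-spaces containing it,
so `d` is a recession direction of `C` exactly when `⟪a, d⟫ ≤ 0` for every `a` whose linear
functional is bounded above on `C`: `0⁺C = (B_C)°`. As `B_C` is a convex cone containing `0`,
the bipolar theorem gives `cl B_C = (B_C)°° = (0⁺C)°`. -/

section InnerProductSpace

variable {E : Type*} [NormedAddCommGroup E] [InnerProductSpace ℝ E]

def polarCone (s : Set E) : Set E :=
  {y | ∀ x ∈ s, ⟪y, x⟫ ≤ 0}

theorem isClosed_polarCone (s : Set E) : IsClosed (polarCone s) := by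
  simp only [polarCone, Set.ofPred_forall]
  exact isClosed_biInter fun x _ ↦
    isClosed_le (continuous_id.inner continuous_const) continuous_const

theorem subset_polarCone_polarCone (s : Set E) : s ⊆ polarCone (polarCone s) :=
  fun y hy x hx ↦ real_inner_comm x y ▸ hx y hy

theorem PointedCone.polarCone_polarCone [CompleteSpace E] (K : PointedCone ℝ E) :
    polarCone (polarCone (K : Set E)) = closure K := by
  refine Set.Subset.antisymm (fun y hy ↦ ?_) ((isClosed_polarCone _).closure_subset_iff.2
    (subset_polarCone_polarCone _))
  by_contra hyK
  obtain ⟨z, hKz, hyz⟩ := ProperCone.hyperplane_separation' (Submodule.closure K) hyK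
  have hz : -z ∈ polarCone (K : Set E) := fun a ha ↦ by
    rw [inner_neg_left, real_inner_comm, neg_nonpos]
    exact hKz a (subset_closure ha)
  have := hy (-z) hz
  rw [inner_neg_right] at this
  linarith

theorem exists_inner_lt_of_notMem [CompleteSpace E] {s : Set E} (hconv : Convex ℝ s)
    (hcl : IsClosed s) {x : E} (hx : x ∉ s) :
    ∃ (a : E) (u : ℝ), (∀ z ∈ s, ⟪a, z⟫ < u) ∧ u < ⟪a, x⟫ := by
  obtain ⟨f, u, hs, hx⟩ := geometric_hahn_banach_closed_point hconv hcl hx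
  refine ⟨(InnerProductSpace.toDual ℝ E).symm f, u, ?_, ?_⟩ <;>
    simpa [InnerProductSpace.toDual_symm_apply]

end InnerProductSpace

section BarrierCone

variable {n : ℕ} {C : Set (EuclideanSpace ℝ (Fin n))}

theorem mem_barrierCone_iff {a : EuclideanSpace ℝ (Fin n)} :
    a ∈ barrierCone C ↔ ∃ M : ℝ, ∀ x ∈ C, ⟪a, x⟫ ≤ M := by
  constructor
  · intro h
    refine ⟨(supp C a).toReal, fun x hx ↦ ?_⟩
    have hle : ((⟪a, x⟫ : ℝ) : EReal) ≤ supp C a :=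
      le_iSup₂ (f := fun x (_ : x ∈ C) ↦ ((⟪a, x⟫ : ℝ) : EReal)) x hx
    exact_mod_cast hle.trans (EReal.le_coe_toReal h.ne_top)
  · rintro ⟨M, hM⟩
    exact (iSup₂_le fun x hx ↦ EReal.coe_le_coe_iff.2 (hM x hx)).trans_lt (EReal.coe_lt_top M)

variable (C) in
def barrierPointedCone : PointedCone ℝ (EuclideanSpace ℝ (Fin n)) where
  carrier := barrierCone C
  zero_mem' := mem_barrierCone_iff.2 ⟨0, fun x _ ↦ by simp⟩
  add_mem' {a b} ha hb := by
    obtain ⟨M, hM⟩ := mem_barrierCone_iff.1 ha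
    obtain ⟨N, hN⟩ := mem_barrierCone_iff.1 hb
    exact mem_barrierCone_iff.2 ⟨M + N, fun x hx ↦ by
      rw [inner_add_left]; exact add_le_add (hM x hx) (hN x hx)⟩
  smul_mem' c a ha := by
    obtain ⟨M, hM⟩ := mem_barrierCone_iff.1 ha
    exact mem_barrierCone_iff.2 ⟨c * M, fun x hx ↦ by
      rw [Nonneg.mk_smul, real_inner_smul_left]; exact mul_le_mul_of_nonneg_left (hM x hx) c.2⟩

theorem inner_nonpos_of_mem_barrierCone_of_mem_recCone (hC : C.Nonempty)
    {a d : EuclideanSpace ℝ (Fin n)} (ha : a ∈ barrierCone C) (hd : d ∈ recCone C) :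
    ⟪a, d⟫ ≤ 0 := by
  obtain ⟨x, hx⟩ := hC
  obtain ⟨M, hM⟩ := mem_barrierCone_iff.1 ha
  by_contra! had
  -- chosen so that `⟪a, x + t • d⟫ = M + 1`
  set t := (M - ⟪a, x⟫ + 1) / ⟪a, d⟫
  have hMx : ⟪a, x⟫ ≤ M := hM x hx
  have hray := hM _ (hd x hx t (div_nonneg (by linarith) had.le))
  rw [inner_add_right, real_inner_smul_right, div_mul_cancel₀ _ had.ne'] at hray
  linarith

theorem mem_recCone_of_forall_inner_nonpos (hcl : IsClosed C) (hconv : Convex ℝ C)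
    {d : EuclideanSpace ℝ (Fin n)} (hd : ∀ a ∈ barrierCone C, ⟪a, d⟫ ≤ 0) : d ∈ recCone C := by
  intro x hx t ht
  by_contra hxtd
  obtain ⟨a, u, hCu, hu⟩ := exists_inner_lt_of_notMem hconv hcl hxtd
  have had : ⟪a, d⟫ ≤ 0 := hd a (mem_barrierCone_iff.2 ⟨u, fun z hz ↦ (hCu z hz).le⟩)
  rw [inner_add_right, real_inner_smul_right] at hu
  linarith [hCu x hx, mul_nonpos_of_nonneg_of_nonpos ht had]

theorem recCone_eq_polarCone_barrierCone (hcl : IsClosed C) (hconv : Convex ℝ C)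
    (hC : C.Nonempty) : recCone C = polarCone (barrierCone C) := by
  ext d
  refine ⟨fun hd a ha ↦ ?_, fun hd ↦ mem_recCone_of_forall_inner_nonpos hcl hconv
    fun a ha ↦ real_inner_comm a d ▸ hd a ha⟩
  rw [real_inner_comm]
  exact inner_nonpos_of_mem_barrierCone_of_mem_recCone hC ha hd

end BarrierCone

theorem stmt1 {n : ℕ} (C : Set (EuclideanSpace ℝ (Fin n)))
    (hcl : IsClosed C) (hconv : Convex ℝ C) (h0 : (0 : EuclideanSpace ℝ (Fin n)) ∈ C) :
    closure (barrierCone C) = {y | ∀ x ∈ recCone C, ⟪y, x⟫ ≤ (0 : ℝ)} := by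
  calc closure (barrierCone C)
      = polarCone (polarCone (barrierCone C)) :=
        (PointedCone.polarCone_polarCone (barrierPointedCone C)).symm
    _ = polarCone (recCone C) := by
        rw [recCone_eq_polarCone_barrierCone hcl hconv ⟨0, h0⟩]
end

section
/- Let C ⊆ ℝⁿ be convex with 0 ∈ C and suppose δ*(ȳ|C) = 0 for some ȳ ≠ 0, and d ∈ ℝⁿ, ε > 0, L > 0 satisfy δ*(d + εu|C) ≤ δ*(d|C) + Lε for all u in the unit ball, with δ*(d|C) + Lε > 0. Define α = (‖ȳ‖²/3)/(δ*(d|C)+Lε), d̄ = αd, ε̄ = αε, δ̄ = ‖ȳ‖/3, and A = conv({ȳ} ∪ (d̄ + ε̄B)) ∩ (ȳ + δ̄B). Then δ*(a|C) < ⟨a,ȳ⟩ for every a ∈ A. -/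
open RealInnerProductSpace

theorem stmt11 {n : ℕ} (C : Set (EuclideanSpace ℝ (Fin n)))
    (hconv : Convex ℝ C) (h0 : (0 : EuclideanSpace ℝ (Fin n)) ∈ C)
    (ybar : EuclideanSpace ℝ (Fin n)) (hybar : ybar ≠ 0)
    (hsy : supp C ybar = (0 : EReal))
    (d : EuclideanSpace ℝ (Fin n)) (ε L sd : ℝ) (hε : 0 < ε) (hL : 0 < L)
    (hsd : supp C d = ((sd : ℝ) : EReal))
    (hpos : 0 < sd + L * ε)
    (hLip : ∀ u : EuclideanSpace ℝ (Fin n), ‖u‖ ≤ 1 →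
      supp C (d + ε • u) ≤ ((sd + L * ε : ℝ) : EReal)) :
    ∀ a ∈ convexHull ℝ ({ybar} ∪
        Metric.closedBall (((‖ybar‖ ^ 2 / 3) / (sd + L * ε)) • d)
          ((‖ybar‖ ^ 2 / 3) / (sd + L * ε) * ε)) ∩
      Metric.closedBall ybar (‖ybar‖ / 3),
      supp C a < ((⟪a, ybar⟫ : ℝ) : EReal) := by
  intro a ha
  obtain ⟨haH, haB⟩ := ha
  have hy0 : (0 : ℝ) < ‖ybar‖ := norm_pos_iff.mpr hybar
  set α : ℝ := (‖ybar‖ ^ 2 / 3) / (sd + L * ε) with hαdef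
  have hαpos : 0 < α := div_pos (by positivity) hpos
  have hαe : α * (sd + L * ε) = ‖ybar‖ ^ 2 / 3 := div_mul_cancel₀ _ hpos.ne'
  -- bounds on inner products with elements of C
  have hyle : ∀ x ∈ C, ⟪ybar, x⟫ ≤ (0 : ℝ) := by
    intro x hx
    have h1 : ((⟪ybar, x⟫ : ℝ) : EReal) ≤ supp C ybar := by
      rw [supp]
      exact le_iSup₂ (f := fun y (_ : y ∈ C) => ((⟪ybar, y⟫ : ℝ) : EReal)) x hx
    rw [hsy] at h1
    exact_mod_cast h1
  have hdle : ∀ u : EuclideanSpace ℝ (Fin n), ‖u‖ ≤ 1 → ∀ x ∈ C,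
      ⟪d + ε • u, x⟫ ≤ sd + L * ε := by
    intro u hu x hx
    have h1 : ((⟪d + ε • u, x⟫ : ℝ) : EReal) ≤ supp C (d + ε • u) := by
      rw [supp]
      exact le_iSup₂ (f := fun y (_ : y ∈ C) => ((⟪d + ε • u, y⟫ : ℝ) : EReal)) x hx
    have h2 := h1.trans (hLip u hu)
    exact_mod_cast h2
  -- the convex set K
  set K : Set (EuclideanSpace ℝ (Fin n)) :=
    {b | ∀ x ∈ C, ⟪b, x⟫ ≤ ‖ybar‖ ^ 2 / 3} with hKdef
  have hKconv : Convex ℝ K := by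
    have hEq : K = ⋂ x ∈ C, {b : EuclideanSpace ℝ (Fin n) | ⟪b, x⟫ ≤ ‖ybar‖ ^ 2 / 3} := by
      ext b; simp [hKdef]
    rw [hEq]
    exact convex_iInter₂ fun x _ => convex_halfSpace_le
      ⟨fun a b => inner_add_left a b x, fun c a => real_inner_smul_left a x c⟩ _
  have hsub : ({ybar} ∪ Metric.closedBall (α • d) (α * ε)) ⊆ K := by
    intro b hb
    rcases hb with hb | hb
    · rcases hb with rfl
      intro x hx
      exact (hyle x hx).trans (by positivity)
    · intro x hx
      have hαε : α * ε ≠ 0 := by positivity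
      set u : EuclideanSpace ℝ (Fin n) := (α * ε)⁻¹ • (b - α • d) with hudef
      have hbd : ‖b - α • d‖ ≤ α * ε := by
        rw [← dist_eq_norm]; exact Metric.mem_closedBall.mp hb
      have hu1 : ‖u‖ ≤ 1 := by
        rw [hudef, norm_smul, norm_inv, Real.norm_eq_abs, abs_of_pos (by positivity)]
        rw [inv_mul_le_iff₀ (by positivity), mul_one]
        exact hbd
      have hbe : b = α • (d + ε • u) := by
        rw [hudef, smul_add, smul_smul, smul_smul, mul_inv_cancel₀ hαε, one_smul]
        abel
      have h1 : ⟪b, x⟫ = α * ⟪d + ε • u, x⟫ := by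
        rw [hbe, real_inner_smul_left]
      rw [h1, ← hαe]
      have := hdle u hu1 x hx
      nlinarith
  have haK : a ∈ K := convexHull_min hsub hKconv haH
  have hsupp : supp C a ≤ ((‖ybar‖ ^ 2 / 3 : ℝ) : EReal) := by
    rw [supp]; exact iSup₂_le fun x hx => EReal.coe_le_coe_iff.mpr (haK x hx)
  -- lower bound on ⟪a, ybar⟫
  have hdist : ‖a - ybar‖ ≤ ‖ybar‖ / 3 := by
    rw [← dist_eq_norm]; exact Metric.mem_closedBall.mp haB
  have hCS : |⟪a - ybar, ybar⟫| ≤ ‖a - ybar‖ * ‖ybar‖ := abs_real_inner_le_norm _ _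
  have hsplit : ⟪a, ybar⟫ = ‖ybar‖ ^ 2 + ⟪a - ybar, ybar⟫ := by
    rw [inner_sub_left, real_inner_self_eq_norm_sq]; ring
  have hlow : ‖ybar‖ ^ 2 / 3 < ⟪a, ybar⟫ := by
    have h2 : ⟪a - ybar, ybar⟫ ≥ -(‖ybar‖ / 3 * ‖ybar‖) := by
      have := neg_abs_le (⟪a - ybar, ybar⟫ : ℝ)
      nlinarith
    nlinarith
  exact lt_of_le_of_lt hsupp (EReal.coe_lt_coe_iff.mpr hlow)
end

section
/- For a nonempty closed convex set C ⊆ ℝⁿ, the recession cone 0⁺C equals the polar of the barrier cone: 0⁺C = (B_C)°, where B_C = {a : sup_{x∈C}⟨a,x⟩ < ∞} and K° = {y : ⟨y,x⟩ ≤ 0 for all x ∈ K} for a cone K. -/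
open RealInnerProductSpace

theorem stmt13 {n : ℕ} (C : Set (EuclideanSpace ℝ (Fin n)))
    (hne : C.Nonempty) (hcl : IsClosed C) (hconv : Convex ℝ C) :
    recCone C = {y | ∀ x ∈ barrierCone C, ⟪y, x⟫ ≤ (0 : ℝ)} := by
  ext d
  simp only [recCone, barrierCone, Set.mem_setOf_eq]
  constructor
  · intro hd a ha
    obtain ⟨x, hx⟩ := hne
    by_contra hpos
    push_neg at hpos
    have hc : (0 : ℝ) < ⟪a, d⟫ := by rwa [real_inner_comm]
    have hle : ∀ t : ℝ, 0 ≤ t →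
        ((⟪a, x⟫ + t * ⟪a, d⟫ : ℝ) : EReal) ≤ supp C a := by
      intro t ht
      have hmem := hd x hx t ht
      have hEq : ⟪a, x + t • d⟫ = ⟪a, x⟫ + t * ⟪a, d⟫ := by
        rw [inner_add_right, real_inner_smul_right]
      have : ((⟪a, x + t • d⟫ : ℝ) : EReal) ≤ supp C a :=
        le_iSup₂ (f := fun z (_ : z ∈ C) => ((⟪a, z⟫ : ℝ) : EReal)) _ hmem
      rwa [hEq] at this
    have hnt : supp C a ≠ ⊤ := ha.ne
    have hnb : supp C a ≠ ⊥ := by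
      intro h
      have := hle 0 le_rfl
      rw [h] at this
      exact (EReal.coe_ne_bot _) (le_bot_iff.mp this)
    set M := (supp C a).toReal with hMdef
    have hM : supp C a = (M : EReal) := (EReal.coe_toReal hnt hnb).symm
    have key : ∀ t : ℝ, 0 ≤ t → ⟪a, x⟫ + t * ⟪a, d⟫ ≤ M := by
      intro t ht
      have := hle t ht
      rw [hM] at this
      exact_mod_cast this
    set t := max 0 ((M - ⟪a, x⟫ + 1) / ⟪a, d⟫) with htdef
    have ht : 0 ≤ t := le_max_left _ _
    have h2 : (M - ⟪a, x⟫ + 1) / ⟪a, d⟫ ≤ t := le_max_right _ _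
    have h3 : M - ⟪a, x⟫ + 1 ≤ t * ⟪a, d⟫ := by
      rw [div_le_iff₀ hc] at h2; linarith
    have := key t ht
    linarith
  · intro hy x hx t ht
    by_contra hmem
    obtain ⟨f, u, hfu, huf⟩ := geometric_hahn_banach_closed_point hconv hcl hmem
    set a := (InnerProductSpace.toDual ℝ (EuclideanSpace ℝ (Fin n))).symm f with hadef
    have hfa : ∀ z, f z = ⟪a, z⟫ := by
      intro z
      rw [hadef]
      simp [InnerProductSpace.toDual_symm_apply]
    have haB : a ∈ barrierCone C := by
      have hsup : supp C a ≤ (u : EReal) := by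
        refine iSup₂_le fun z hz => ?_
        exact_mod_cast (by rw [← hfa]; exact (hfu z hz).le : ⟪a, z⟫ ≤ u)
      exact lt_of_le_of_lt hsup (EReal.coe_lt_top u)
    have hya : ⟪a, d⟫ ≤ 0 := by rw [real_inner_comm]; exact hy a haB
    have hfx : f x < u := hfu x hx
    have : f (x + t • d) = ⟪a, x⟫ + t * ⟪a, d⟫ := by
      rw [hfa, inner_add_right, real_inner_smul_right]
    have hta : t * ⟪a, d⟫ ≤ 0 := mul_nonpos_of_nonneg_of_nonpos ht hya
    rw [hfa] at hfx
    rw [this] at huf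
    linarith
end
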